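/- Let (α*, r*) be an optimal solution to CP(G, h). Then for every vertex u ∈ V, the h-clique compact number of u equals r*(u), i.e., φ_h(u) = r*(u). -/

import Mathlib

open Finset

variable {V : Type*} [Fintype V] [DecidableEq V]

/-- `Ψ_h(G[S])`: the set of `h`-cliques of `G` all of whose vertices lie in `S`
(equivalently, the `h`-cliques of the induced subgraph `G[S]`). -/
def cliquesIn (G : SimpleGraph V) [DecidableRel G.Adj] (h : ℕ) (S : Finset V) :
    Finset (Finset V) :=
  Finset.univ.filter fun c => G.IsNClique h c ∧ c ⊆ S

/-- the `h`-clique density `d_h(G[S]) = |Ψ_h(G[S])| / |S|`. -/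
noncomputable def cliqueDensity (G : SimpleGraph V) [DecidableRel G.Adj] (h : ℕ)
    (S : Finset V) : ℝ :=
  ((cliquesIn G h S).card : ℝ) / (S.card : ℝ)

/-- `G[S]` is `h`-clique `ρ`-compact: `S` is nonempty, the induced subgraph is
connected, and removing any nonempty `U ⊆ S` removes at least `ρ·|U|` `h`-cliques. -/
def IsCliqueCompact (G : SimpleGraph V) [DecidableRel G.Adj] (h : ℕ) (ρ : ℝ)
    (S : Finset V) : Prop :=
  S.Nonempty ∧ (G.induce (S : Set V)).Connected ∧
    ∀ U ⊆ S, U.Nonempty →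
      ρ * (U.card : ℝ) ≤ ((cliquesIn G h S).card : ℝ) - ((cliquesIn G h (S \ U)).card : ℝ)

/-- `G[S]` is a locally `h`-clique densest subgraph of `G`. -/
def IsLhCDS (G : SimpleGraph V) [DecidableRel G.Adj] (h : ℕ) (S : Finset V) : Prop :=
  IsCliqueCompact G h (cliqueDensity G h S) S ∧
    ¬ ∃ S' : Finset V, S ⊂ S' ∧ IsCliqueCompact G h (cliqueDensity G h S) S'

/-- the `h`-clique compact number `φ_h(u)` of a vertex `u`. -/
noncomputable def compactNumber (G : SimpleGraph V) [DecidableRel G.Adj] (h : ℕ)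
    (u : V) : ℝ :=
  sSup {ρ : ℝ | 0 ≤ ρ ∧ ∃ S : Finset V, u ∈ S ∧ IsCliqueCompact G h ρ S}

/-- `α` is a feasible solution to the convex program `CP(G,h)`: each `h`-clique
distributes a unit weight, nonnegatively, among its vertices. -/
def CPFeasible (G : SimpleGraph V) [DecidableRel G.Adj] (h : ℕ)
    (α : Finset V → V → ℝ) : Prop :=
  (∀ ψ ∈ cliquesIn G h Finset.univ, ∀ u ∈ ψ, 0 ≤ α ψ u) ∧
    (∀ ψ ∈ cliquesIn G h Finset.univ, ∑ u ∈ ψ, α ψ u = 1)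

/-- `r(u)`: the total weight received by vertex `u` under `α`. -/
def cpR (G : SimpleGraph V) [DecidableRel G.Adj] (h : ℕ) (α : Finset V → V → ℝ)
    (u : V) : ℝ :=
  ∑ ψ ∈ (cliquesIn G h Finset.univ).filter (fun ψ => u ∈ ψ), α ψ u

/-- `α` is an optimal solution to `CP(G,h)`: it is feasible and minimizes
`Σ_u r(u)²` over all feasible solutions. -/
def CPOptimal (G : SimpleGraph V) [DecidableRel G.Adj] (h : ℕ)
    (α : Finset V → V → ℝ) : Prop :=
  CPFeasible G h α ∧
    ∀ β : Finset V → V → ℝ, CPFeasible G h β →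
      ∑ u : V, (cpR G h α u) ^ 2 ≤ ∑ u : V, (cpR G h β u) ^ 2


/-!
Optimality of `α` yields the KKT condition: a clique gives positive weight to a vertex `v` only
if `r v` is minimal on that clique, since otherwise moving a little of that weight to a vertex
with smaller load decreases `∑ r²`.

If `S ∋ u` is `ρ`-compact and `r u < ρ`, let `U` be the vertices of `S` with `r < ρ`. By KKT a
clique of `S` meeting `U` puts all its weight into `U`, so removing `U` deletes at most
`∑_{v ∈ U} r v < ρ |U|` cliques, a contradiction; hence `φ_h(u) ≤ r u`.

Conversely, let `S` be the component of `u` in the subgraph induced by `{x | r u ≤ r x}`. By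
KKT every clique giving weight to a vertex of `S` lies in `S`, so removing `U ⊆ S` deletes at
least `∑_{v ∈ U} r v ≥ r u · |U|` cliques: `S` is `r u`-compact.
-/

open Finset

theorem SimpleGraph.exists_connected_induce_adj_closed {W : Type*} (G : SimpleGraph W)
    {T : Set W} {u : W} (hu : u ∈ T) :
    ∃ S ⊆ T, u ∈ S ∧ (G.induce S).Connected ∧ ∀ v ∈ S, ∀ w ∈ T, G.Adj v w → w ∈ S := by
  set C := (G.induce T).connectedComponentMk ⟨u, hu⟩
  refine ⟨Subtype.val '' C.supp, by simp, ⟨⟨u, hu⟩, rfl, rfl⟩, ?_, ?_⟩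
  · let f : C.toSimpleGraph →g G.induce (Subtype.val '' C.supp) :=
      { toFun := fun x => ⟨x.1.1, x.1, x.2, rfl⟩, map_rel' := fun hxy => hxy }
    refine C.connected_toSimpleGraph.map f ?_
    rintro ⟨_, x, hx, rfl⟩
    exact ⟨⟨x, hx⟩, rfl⟩
  · rintro _ ⟨v, hv, rfl⟩ w hw hvw
    refine ⟨⟨w, hw⟩, ?_, rfl⟩
    rw [ConnectedComponent.mem_supp_iff] at hv ⊢
    exact (ConnectedComponent.connectedComponentMk_eq_of_adj
      (G := G.induce T) (w := ⟨w, hw⟩) hvw).symm.trans hv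

theorem Finset.sum_sum_filter_mem_eq_sum_sum_inter {ι M : Type*} [DecidableEq ι]
    [AddCommMonoid M] (f : Finset ι → ι → M) (R : Finset (Finset ι)) (U : Finset ι) :
    ∑ v ∈ U, ∑ ψ ∈ R with v ∈ ψ, f ψ v = ∑ ψ ∈ R, ∑ v ∈ ψ ∩ U, f ψ v :=
  sum_comm' fun v ψ => by simp only [mem_filter, mem_inter]; tauto

theorem sum_sq_add_single_sub_single {ι : Type*} [Fintype ι] [DecidableEq ι] (r : ι → ℝ)
    {v w : ι} (hvw : v ≠ w) (ε : ℝ) :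
    ∑ x, (r x + (Pi.single w ε - Pi.single v ε : ι → ℝ) x) ^ 2
      = ∑ x, r x ^ 2 + 2 * ε * (r w - r v) + 2 * ε ^ 2 := by
  have pointwise : ∀ x, (r x + (Pi.single w ε - Pi.single v ε : ι → ℝ) x) ^ 2
      = r x ^ 2
        + ((Pi.single w (2 * ε * r w + ε ^ 2) : ι → ℝ) x
          + (Pi.single v (ε ^ 2 - 2 * ε * r v) : ι → ℝ) x) := by
    intro x
    by_cases hxw : x = w
    · subst hxw
      simp [hvw.symm]
      ring
    · by_cases hxv : x = v
      · subst hxv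
        simp [hxw]
        ring
      · simp [hxv, hxw]
  simp only [pointwise, sum_add_distrib, Fintype.sum_pi_single']
  ring

def transferWeight {ι : Type*} [DecidableEq ι] (α : Finset ι → ι → ℝ) (ψ : Finset ι)
    (v w : ι) (ε : ℝ) : Finset ι → ι → ℝ :=
  fun ψ' x => α ψ' x + if ψ' = ψ then (Pi.single w ε - Pi.single v ε : ι → ℝ) x else 0

section Cliques

variable {G : SimpleGraph V} [DecidableRel G.Adj] {h : ℕ}

theorem mem_cliquesIn {S ψ : Finset V} : ψ ∈ cliquesIn G h S ↔ G.IsNClique h ψ ∧ ψ ⊆ S := by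
  simp [cliquesIn]

theorem cliquesIn_mono {S T : Finset V} (hST : S ⊆ T) : cliquesIn G h S ⊆ cliquesIn G h T :=
  fun _ hψ => mem_cliquesIn.2 ⟨(mem_cliquesIn.1 hψ).1, (mem_cliquesIn.1 hψ).2.trans hST⟩

variable (G h) in
def removedCliques (S U : Finset V) : Finset (Finset V) :=
  cliquesIn G h S \ cliquesIn G h (S \ U)

theorem mem_removedCliques {S U ψ : Finset V} :
    ψ ∈ removedCliques G h S U ↔ ψ ∈ cliquesIn G h S ∧ ∃ v ∈ ψ, v ∈ U := by
  simp only [removedCliques, mem_sdiff, mem_cliquesIn, subset_sdiff, not_and,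
    Finset.not_disjoint_iff]
  tauto

theorem removedCliques_subset (S U : Finset V) :
    removedCliques G h S U ⊆ cliquesIn G h univ :=
  sdiff_subset.trans (cliquesIn_mono (subset_univ S))

theorem card_removedCliques (S U : Finset V) :
    (#(removedCliques G h S U) : ℝ) = #(cliquesIn G h S) - #(cliquesIn G h (S \ U)) := by
  have hsub := cliquesIn_mono (G := G) (h := h) (sdiff_subset (s := S) (t := U))
  rw [removedCliques, card_sdiff_of_subset hsub, Nat.cast_sub (card_le_card hsub)]

end Cliques

section Weights

variable {G : SimpleGraph V} [DecidableRel G.Adj] {h : ℕ} {α : Finset V → V → ℝ}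

theorem CPFeasible.cpR_nonneg (hα : CPFeasible G h α) (v : V) : 0 ≤ cpR G h α v :=
  sum_nonneg fun ψ hψ => hα.1 ψ (mem_filter.1 hψ).1 v (mem_filter.1 hψ).2

theorem CPFeasible.sum_inter_le_one (hα : CPFeasible G h α) {ψ : Finset V}
    (hψ : ψ ∈ cliquesIn G h univ) (U : Finset V) : ∑ v ∈ ψ ∩ U, α ψ v ≤ 1 :=
  hα.2 ψ hψ ▸ sum_le_sum_of_subset_of_nonneg inter_subset_left fun v hv _ => hα.1 ψ hψ v hv

theorem CPFeasible.sum_inter_eq_one (hα : CPFeasible G h α) {ψ U : Finset V}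
    (hψ : ψ ∈ cliquesIn G h univ) (hU : ∀ v ∈ ψ, v ∉ U → α ψ v = 0) :
    ∑ v ∈ ψ ∩ U, α ψ v = 1 :=
  hα.2 ψ hψ ▸ sum_subset inter_subset_left fun v hv hvU =>
    hU v hv fun hv' => hvU (mem_inter.2 ⟨hv, hv'⟩)

theorem CPFeasible.sum_filter_mem_le_cpR (hα : CPFeasible G h α) {R : Finset (Finset V)}
    (hR : R ⊆ cliquesIn G h univ) (v : V) : ∑ ψ ∈ R with v ∈ ψ, α ψ v ≤ cpR G h α v :=
  sum_le_sum_of_subset_of_nonneg (filter_subset_filter _ hR) fun ψ hψ _ =>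
    hα.1 ψ (mem_filter.1 hψ).1 v (mem_filter.1 hψ).2

theorem cpR_eq_sum_filter_mem {R : Finset (Finset V)} (hR : R ⊆ cliquesIn G h univ) {v : V}
    (hv : ∀ ψ ∈ cliquesIn G h univ, v ∈ ψ → α ψ v ≠ 0 → ψ ∈ R) :
    cpR G h α v = ∑ ψ ∈ R with v ∈ ψ, α ψ v := by
  refine (sum_subset (filter_subset_filter _ hR) fun ψ hψ hψR => ?_).symm
  obtain ⟨hψ, hvψ⟩ := mem_filter.1 hψ
  by_contra hne
  exact hψR (mem_filter.2 ⟨hv ψ hψ hvψ hne, hvψ⟩)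

theorem cpR_transferWeight {ψ : Finset V} (hψ : ψ ∈ cliquesIn G h univ) {v w : V}
    (hv : v ∈ ψ) (hw : w ∈ ψ) (ε : ℝ) (x : V) :
    cpR G h (transferWeight α ψ v w ε) x
      = cpR G h α x + (Pi.single w ε - Pi.single v ε : V → ℝ) x := by
  simp only [cpR, transferWeight, sum_add_distrib, sum_ite_eq', mem_filter]
  by_cases hx : x ∈ ψ
  · simp [hψ, hx]
  · simp [hx, ne_of_mem_of_not_mem hv hx |>.symm,
      ne_of_mem_of_not_mem hw hx |>.symm]

theorem CPFeasible.transferWeight (hα : CPFeasible G h α) {ψ : Finset V} {v w : V}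
    (hv : v ∈ ψ) (hw : w ∈ ψ) {ε : ℝ} (hε : 0 ≤ ε) (hεv : ε ≤ α ψ v) :
    CPFeasible G h (_root_.transferWeight α ψ v w ε) := by
  refine ⟨fun ψ' hψ' x hx => ?_, fun ψ' hψ' => ?_⟩
  · have hαx := hα.1 ψ' hψ' x hx
    simp only [_root_.transferWeight]
    split_ifs with hψ'ψ
    · subst hψ'ψ
      have hεw : 0 ≤ (Pi.single w ε : V → ℝ) x := by
        by_cases hxw : x = w <;> simp [hxw, hε]
      rw [Pi.sub_apply]
      rcases eq_or_ne x v with rfl | hxv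
      · rw [Pi.single_eq_same]
        linarith
      · rw [Pi.single_eq_of_ne hxv]
        linarith
    · linarith
  · simp only [_root_.transferWeight, sum_add_distrib, hα.2 ψ' hψ']
    split_ifs with hψ'ψ
    · subst hψ'ψ
      simp [sum_sub_distrib, hv, hw]
    · simp

theorem CPOptimal.cpR_le_of_pos (hopt : CPOptimal G h α) {ψ : Finset V}
    (hψ : ψ ∈ cliquesIn G h univ) {v w : V} (hv : v ∈ ψ) (hw : w ∈ ψ) (hpos : 0 < α ψ v) :
    cpR G h α v ≤ cpR G h α w := by
  by_contra! hlt
  have hvw : v ≠ w := by rintro rfl; exact lt_irrefl _ hlt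
  set ε := min (α ψ v) ((cpR G h α v - cpR G h α w) / 2)
  have hε : 0 < ε := lt_min hpos (by linarith)
  have hmin := hopt.2 _ (hopt.1.transferWeight hv hw hε.le (min_le_left _ _))
  simp only [cpR_transferWeight hψ hv hw, sum_sq_add_single_sub_single _ hvw] at hmin
  nlinarith [min_le_right (α ψ v) ((cpR G h α v - cpR G h α w) / 2)]

theorem CPOptimal.le_cpR_of_isCliqueCompact (hopt : CPOptimal G h α) {ρ : ℝ} {S : Finset V}
    {u : V} (hu : u ∈ S) (hS : IsCliqueCompact G h ρ S) : ρ ≤ cpR G h α u := by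
  by_contra! hlt
  set r := cpR G h α
  set U := S.filter (fun v => r v < ρ)
  have hU : U.Nonempty := ⟨u, mem_filter.2 ⟨hu, hlt⟩⟩
  have hR := removedCliques_subset (G := G) (h := h) S U
  have concentrated : ∀ ψ ∈ removedCliques G h S U, ∑ v ∈ ψ ∩ U, α ψ v = 1 := by
    intro ψ hψ
    obtain ⟨hψS, v₀, hv₀, hv₀U⟩ := mem_removedCliques.1 hψ
    refine hopt.1.sum_inter_eq_one (hR hψ) fun v hv hvU => ?_
    by_contra hne
    have hle := hopt.cpR_le_of_pos (hR hψ) hv hv₀ ((hopt.1.1 _ (hR hψ) v hv).lt_of_ne' hne)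
    have hρv : ρ ≤ r v := by
      simpa [U, (mem_cliquesIn.1 hψS).2 hv] using hvU
    have hv₀ρ : r v₀ < ρ := (mem_filter.1 hv₀U).2
    linarith
  refine lt_irrefl (ρ * #U) ?_
  calc ρ * #U
      ≤ #(removedCliques G h S U) :=
        card_removedCliques (G := G) S U ▸ hS.2.2 U (filter_subset _ _) hU
    _ = ∑ ψ ∈ removedCliques G h S U, ∑ v ∈ ψ ∩ U, α ψ v := by simp [sum_congr rfl concentrated]
    _ = ∑ v ∈ U, ∑ ψ ∈ removedCliques G h S U with v ∈ ψ, α ψ v :=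
      (sum_sum_filter_mem_eq_sum_sum_inter _ _ _).symm
    _ ≤ ∑ v ∈ U, r v := sum_le_sum fun v _ => hopt.1.sum_filter_mem_le_cpR hR v
    _ < ∑ _v ∈ U, ρ := sum_lt_sum_of_nonempty hU fun v hv => (mem_filter.1 hv).2
    _ = ρ * #U := by simp [mul_comm]

theorem CPOptimal.exists_isCliqueCompact_cpR (hopt : CPOptimal G h α) (u : V) :
    ∃ S : Finset V, u ∈ S ∧ IsCliqueCompact G h (cpR G h α u) S := by
  set r := cpR G h α
  obtain ⟨S, hST, huS, hconn, hclosed⟩ :=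
    G.exists_connected_induce_adj_closed (T := {x | r u ≤ r x}) (le_refl (r u))
  lift S to Finset V using S.toFinite
  refine ⟨S, huS, ⟨u, huS⟩, hconn, fun U hUS hU => ?_⟩
  have hR := removedCliques_subset (G := G) (h := h) S U
  have load_eq : ∀ v ∈ U, r v = ∑ ψ ∈ removedCliques G h S U with v ∈ ψ, α ψ v := by
    intro v hv
    refine cpR_eq_sum_filter_mem hR fun ψ hψ hvψ hne => ?_
    have hpos := (hopt.1.1 ψ hψ v hvψ).lt_of_ne' hne
    have hψS : ψ ⊆ S := fun w hw => by
      by_cases hwv : w = v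
      · exact hwv ▸ hUS hv
      · exact hclosed v (hUS hv) w ((hST (hUS hv)).trans (hopt.cpR_le_of_pos hψ hvψ hw hpos))
          ((mem_cliquesIn.1 hψ).1.1 hvψ hw (Ne.symm hwv))
    exact mem_removedCliques.2 ⟨mem_cliquesIn.2 ⟨(mem_cliquesIn.1 hψ).1, hψS⟩, v, hvψ, hv⟩
  rw [← card_removedCliques]
  calc r u * #U
      = ∑ _v ∈ U, r u := by simp [mul_comm]
    _ ≤ ∑ v ∈ U, r v := sum_le_sum fun v hv => hST (hUS hv)
    _ = ∑ v ∈ U, ∑ ψ ∈ removedCliques G h S U with v ∈ ψ, α ψ v := sum_congr rfl load_eq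
    _ = ∑ ψ ∈ removedCliques G h S U, ∑ v ∈ ψ ∩ U, α ψ v :=
      sum_sum_filter_mem_eq_sum_sum_inter _ _ _
    _ ≤ ∑ _ψ ∈ removedCliques G h S U, 1 :=
      sum_le_sum fun ψ hψ => hopt.1.sum_inter_le_one (hR hψ) U
    _ = #(removedCliques G h S U) := by simp

end Weights

theorem stmt_7_general (G : SimpleGraph V) [DecidableRel G.Adj] (h : ℕ)
    (α : Finset V → V → ℝ) (hopt : CPOptimal G h α) :
    ∀ u : V, compactNumber G h u = cpR G h α u := by
  intro u
  obtain ⟨S, huS, hS⟩ := hopt.exists_isCliqueCompact_cpR u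
  refine IsGreatest.csSup_eq ⟨⟨hopt.1.cpR_nonneg u, S, huS, hS⟩, ?_⟩
  rintro ρ ⟨-, S', huS', hS'⟩
  exact hopt.le_cpR_of_isCliqueCompact huS' hS'

/-- If `(α*, r*)` is an optimal solution to `CP(G,h)`, then for every
vertex `u`, the `h`-clique compact number of `u` equals `r*(u)`. -/
theorem stmt_7 (G : SimpleGraph V) [DecidableRel G.Adj] (h : ℕ) (hh : 2 ≤ h)
    (α : Finset V → V → ℝ) (hopt : CPOptimal G h α) :
    ∀ u : V, compactNumber G h u = cpR G h α u :=
  stmt_7_general G h α hopt
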